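/- Let A ∈ ℝ^{m×n} have rank ρ, fix k with 0 ≤ k ≤ ρ, let Ω ∈ ℝ^{n×r} with r ≥ k, and set Y = A Ω. If V_kᵀ Ω has full row rank, then for ξ ∈ {2, F}: ‖A_k − Y Y⁺ A‖_ξ² ≤ ‖A − A_k‖_ξ² + ‖Σ_{ρ−k} V_{ρ−k}ᵀ Ω (V_kᵀ Ω)⁺‖_ξ². (Forward error bound for projection-based low-rank approximation.) -/

import Mathlib

open Matrix

/-- Spectral norm (largest singular value) of a real matrix. -/
noncomputable def specNorm {m n : ℕ} (A : Matrix (Fin m) (Fin n) ℝ) : ℝ :=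
  ‖LinearMap.toContinuousLinearMap (Matrix.toEuclideanLin A)‖

/-- Frobenius norm of a real matrix. -/
noncomputable def frobNorm {m n : ℕ} (A : Matrix (Fin m) (Fin n) ℝ) : ℝ :=
  Real.sqrt (∑ i, ∑ j, (A i j) ^ 2)

/-- `P` satisfies the four Penrose conditions for being the Moore–Penrose
pseudoinverse of `A`. -/
def IsMoorePenrose {m n : ℕ} (A : Matrix (Fin m) (Fin n) ℝ)
    (P : Matrix (Fin n) (Fin m) ℝ) : Prop :=
  A * P * A = A ∧ P * A * P = P ∧ (A * P)ᵀ = A * P ∧ (P * A)ᵀ = P * A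

/-!
Let `P = Y Y⁺`, the orthogonal projector onto the range of `Y = A Ω`. Full row rank of `V_kᵀ Ω`
makes `(V_kᵀ Ω)(V_kᵀ Ω)⁺ = I`, so `A_k + U_{ρ−k} F V_kᵀ = Y (V_kᵀ Ω)⁺ V_kᵀ` lies in the range of
`P`, where `F = Σ_{ρ−k} V_{ρ−k}ᵀ Ω (V_kᵀ Ω)⁺`. Hence
`A_k − P A = −((I − P) U_{ρ−k} F V_kᵀ + P (A − A_k))`, a sum of two matrices with orthogonal
column spaces. Pythagoras (an identity for the Frobenius norm, an inequality obtained from the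
C⋆-identity for the spectral norm), contractivity of orthogonal projectors and the orthonormality
of the columns of `U_{ρ−k}` and `V_k` give the bound.
-/

theorem IsMoorePenrose.isStarProjection_mul {p q : ℕ} {M : Matrix (Fin p) (Fin q) ℝ}
    {M' : Matrix (Fin q) (Fin p) ℝ} (h : IsMoorePenrose M M') : IsStarProjection (M * M') where
  isIdempotentElem := by rw [IsIdempotentElem, ← Matrix.mul_assoc, h.1]
  isSelfAdjoint := by
    rw [IsSelfAdjoint, star_eq_conjTranspose, conjTranspose_eq_transpose_of_trivial, h.2.2.1]

namespace Matrix

theorem mul_eq_one_of_mul_mul_eq_of_rank_eq {m n K : Type*} [Fintype m] [Fintype n]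
    [DecidableEq m] [Field K] {M : Matrix m n K} {Q : Matrix n m K} (hMQM : M * Q * M = M)
    (hM : M.rank = Fintype.card m) : M * Q = 1 := by
  have hsurj : Function.Surjective M.mulVecLin := by
    rw [← LinearMap.range_eq_top]
    apply Submodule.eq_top_of_finrank_eq
    rw [← Matrix.rank, hM, Module.finrank_fintype_fun_eq_card]
  refine ext_iff_mulVec.2 fun x => ?_
  obtain ⟨y, rfl⟩ := hsurj x
  rw [mulVecLin_apply, one_mulVec, mulVec_mulVec, hMQM]

theorem svdTruncation_sub_proj_mul_eq {k l m n o r R : Type*} [Fintype k] [Fintype l]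
    [Fintype m] [Fintype n] [Fintype o] [Fintype r] [DecidableEq k] [DecidableEq m] [CommRing R]
    {A : Matrix m n R} {B : Matrix m k R} {U : Matrix m l R} {S : Matrix l o R}
    {Vk : Matrix n k R} {Vr : Matrix n o R} {Ω : Matrix n r R} {Q : Matrix r k R}
    {P : Matrix m m R} (hA : A = B * Vkᵀ + U * S * Vrᵀ) (hQ : Vkᵀ * Ω * Q = 1)
    (hP : P * (A * Ω) = A * Ω) :
    B * Vkᵀ - P * A = -((1 - P) * (U * (S * Vrᵀ * Ω * Q) * Vkᵀ) + P * (A - B * Vkᵀ)) := by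
  set W := U * (S * Vrᵀ * Ω * Q) * Vkᵀ
  have hAΩQ : A * Ω * Q * Vkᵀ = B * Vkᵀ + W := calc
    _ = (B * (Vkᵀ * Ω * Q) + U * (S * Vrᵀ * Ω * Q)) * Vkᵀ := by
      simp only [hA, Matrix.add_mul, Matrix.mul_assoc]
    _ = B * Vkᵀ + W := by rw [hQ, Matrix.mul_one, Matrix.add_mul]
  have hPW : P * (B * Vkᵀ) + P * W = B * Vkᵀ + W := calc
    _ = P * (A * Ω) * (Q * Vkᵀ) := by
      rw [← Matrix.mul_add, ← hAΩQ]; simp only [Matrix.mul_assoc]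
    _ = B * Vkᵀ + W := by
      rw [hP, ← hAΩQ]; simp only [Matrix.mul_assoc]
  rw [Matrix.sub_mul, Matrix.one_mul, Matrix.mul_sub, eq_sub_of_add_eq' hPW]
  abel

theorem IsStarProjection.transpose_eq {m : Type*} [Fintype m] {P : Matrix m m ℝ}
    (hP : IsStarProjection P) : Pᵀ = P := by
  rw [← conjTranspose_eq_transpose_of_trivial]
  exact hP.isSelfAdjoint

theorem IsStarProjection.transpose_one_sub_mul_mul_eq_zero {l m n : Type*} [Fintype m]
    [DecidableEq m] {P : Matrix m m ℝ} (hP : IsStarProjection P) (M : Matrix m n ℝ)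
    (N : Matrix m l ℝ) : ((1 - P) * M)ᵀ * (P * N) = 0 := by
  rw [transpose_mul, hP.one_sub.transpose_eq, Matrix.mul_assoc, ← Matrix.mul_assoc (1 - P),
    hP.one_sub_mul_self, Matrix.zero_mul, Matrix.mul_zero]

theorem transpose_mul_eq_zero_comm {l m n R : Type*} [Fintype m] [CommSemiring R]
    {X : Matrix m n R} {Y : Matrix m l R} (h : Xᵀ * Y = 0) : Yᵀ * X = 0 := by
  rw [← transpose_transpose (Yᵀ * X), transpose_mul, transpose_transpose, h, transpose_zero]

section L2OpNorm

open scoped Matrix.Norms.L2Operator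

variable {l m n : Type*} [Fintype l] [Fintype m] [Fintype n] [DecidableEq n]

theorem l2_opNorm_transpose [DecidableEq m] (A : Matrix m n ℝ) : ‖Aᵀ‖ = ‖A‖ := by
  rw [← conjTranspose_eq_transpose_of_trivial, l2_opNorm_conjTranspose]

theorem l2_opNorm_add_sq_le_of_transpose_mul_eq_zero {X Y : Matrix m n ℝ} (h : Xᵀ * Y = 0) :
    ‖X + Y‖ ^ 2 ≤ ‖X‖ ^ 2 + ‖Y‖ ^ 2 := by
  have hgram : (X + Y)ᴴ * (X + Y) = Xᴴ * X + Yᴴ * Y := by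
    simp only [conjTranspose_eq_transpose_of_trivial, transpose_add, Matrix.add_mul,
      Matrix.mul_add, h, transpose_mul_eq_zero_comm h, add_zero, zero_add]
  calc ‖X + Y‖ ^ 2 = ‖Xᴴ * X + Yᴴ * Y‖ := by rw [← hgram, l2_opNorm_conjTranspose_mul_self, sq]
    _ ≤ ‖Xᴴ * X‖ + ‖Yᴴ * Y‖ := norm_add_le _ _
    _ = ‖X‖ ^ 2 + ‖Y‖ ^ 2 := by simp only [l2_opNorm_conjTranspose_mul_self, sq]

theorem l2_opNorm_mul_le_of_isStarProjection [DecidableEq m] {P : Matrix m m ℝ}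
    (hP : IsStarProjection P) (M : Matrix m n ℝ) : ‖P * M‖ ≤ ‖M‖ :=
  calc ‖P * M‖ ≤ ‖P‖ * ‖M‖ := l2_opNorm_mul P M
    _ ≤ ‖M‖ := mul_le_of_le_one_left (norm_nonneg M) (hP.norm_le P)

theorem l2_opNorm_one_sub_mul_add_mul_sq_le [DecidableEq m] {P : Matrix m m ℝ}
    (hP : IsStarProjection P) (M N : Matrix m n ℝ) :
    ‖(1 - P) * M + P * N‖ ^ 2 ≤ ‖M‖ ^ 2 + ‖N‖ ^ 2 :=
  calc ‖(1 - P) * M + P * N‖ ^ 2 ≤ ‖(1 - P) * M‖ ^ 2 + ‖P * N‖ ^ 2 :=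
        l2_opNorm_add_sq_le_of_transpose_mul_eq_zero (hP.transpose_one_sub_mul_mul_eq_zero M N)
    _ ≤ ‖M‖ ^ 2 + ‖N‖ ^ 2 := by
      gcongr
      · exact l2_opNorm_mul_le_of_isStarProjection hP.one_sub M
      · exact l2_opNorm_mul_le_of_isStarProjection hP N

theorem l2_opNorm_mul_of_transpose_mul_self_eq_one [DecidableEq l] {U : Matrix m l ℝ}
    (hU : Uᵀ * U = 1) (M : Matrix l n ℝ) : ‖U * M‖ = ‖M‖ := by
  have hU' : Uᴴ * U = 1 := by rw [conjTranspose_eq_transpose_of_trivial, hU]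
  rw [← mul_self_inj (norm_nonneg _) (norm_nonneg _), ← l2_opNorm_conjTranspose_mul_self,
    ← l2_opNorm_conjTranspose_mul_self, conjTranspose_mul, Matrix.mul_assoc,
    ← Matrix.mul_assoc Uᴴ, hU', Matrix.one_mul]

theorem l2_opNorm_mul_transpose_of_transpose_mul_self_eq_one [DecidableEq l] [DecidableEq m]
    {V : Matrix n l ℝ} (hV : Vᵀ * V = 1) (M : Matrix m l ℝ) : ‖M * Vᵀ‖ = ‖M‖ := by
  rw [← l2_opNorm_transpose, transpose_mul, transpose_transpose,
    l2_opNorm_mul_of_transpose_mul_self_eq_one hV, l2_opNorm_transpose]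

end L2OpNorm

end Matrix

open scoped Matrix.Norms.L2Operator in
theorem specNorm_eq_l2_opNorm {m n : ℕ} (A : Matrix (Fin m) (Fin n) ℝ) : specNorm A = ‖A‖ :=
  rfl

theorem specNorm_neg {m n : ℕ} (A : Matrix (Fin m) (Fin n) ℝ) : specNorm (-A) = specNorm A := by
  simp only [specNorm, map_neg, norm_neg]

section Frobenius

variable {l m n : ℕ}

theorem frobNorm_nonneg (A : Matrix (Fin m) (Fin n) ℝ) : 0 ≤ frobNorm A :=
  Real.sqrt_nonneg _

theorem frobNorm_sq (A : Matrix (Fin m) (Fin n) ℝ) : frobNorm A ^ 2 = (Aᵀ * A).trace := by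
  rw [frobNorm, Real.sq_sqrt (by positivity), Finset.sum_comm]
  simp only [trace, diag, mul_apply, transpose_apply, sq]

theorem frobNorm_neg (A : Matrix (Fin m) (Fin n) ℝ) : frobNorm (-A) = frobNorm A := by
  simp [frobNorm]

theorem frobNorm_transpose (A : Matrix (Fin m) (Fin n) ℝ) : frobNorm Aᵀ = frobNorm A := by
  rw [frobNorm, frobNorm, Finset.sum_comm]
  rfl

theorem frobNorm_add_sq_of_transpose_mul_eq_zero {X Y : Matrix (Fin m) (Fin n) ℝ}
    (h : Xᵀ * Y = 0) : frobNorm (X + Y) ^ 2 = frobNorm X ^ 2 + frobNorm Y ^ 2 := by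
  simp only [frobNorm_sq, transpose_add, Matrix.add_mul, Matrix.mul_add, h,
    transpose_mul_eq_zero_comm h, add_zero, zero_add, trace_add]

theorem frobNorm_mul_le_of_isStarProjection {P : Matrix (Fin m) (Fin m) ℝ}
    (hP : IsStarProjection P) (M : Matrix (Fin m) (Fin n) ℝ) : frobNorm (P * M) ≤ frobNorm M := by
  have hsplit : frobNorm M ^ 2 = frobNorm ((1 - P) * M) ^ 2 + frobNorm (P * M) ^ 2 := by
    rw [← frobNorm_add_sq_of_transpose_mul_eq_zero (hP.transpose_one_sub_mul_mul_eq_zero M M),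
      ← Matrix.add_mul, sub_add_cancel, Matrix.one_mul]
  refine le_of_sq_le_sq ?_ (frobNorm_nonneg M)
  rw [hsplit]
  exact le_add_of_nonneg_left (sq_nonneg _)

theorem frobNorm_one_sub_mul_add_mul_sq_le {P : Matrix (Fin m) (Fin m) ℝ}
    (hP : IsStarProjection P) (M N : Matrix (Fin m) (Fin n) ℝ) :
    frobNorm ((1 - P) * M + P * N) ^ 2 ≤ frobNorm M ^ 2 + frobNorm N ^ 2 := by
  rw [frobNorm_add_sq_of_transpose_mul_eq_zero (hP.transpose_one_sub_mul_mul_eq_zero M N)]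
  gcongr
  · exact frobNorm_nonneg _
  · exact frobNorm_mul_le_of_isStarProjection hP.one_sub M
  · exact frobNorm_nonneg _
  · exact frobNorm_mul_le_of_isStarProjection hP N

theorem frobNorm_mul_of_transpose_mul_self_eq_one {U : Matrix (Fin m) (Fin l) ℝ}
    (hU : Uᵀ * U = 1) (M : Matrix (Fin l) (Fin n) ℝ) : frobNorm (U * M) = frobNorm M := by
  rw [← sq_eq_sq₀ (frobNorm_nonneg _) (frobNorm_nonneg _), frobNorm_sq, frobNorm_sq,
    transpose_mul, Matrix.mul_assoc, ← Matrix.mul_assoc Uᵀ, hU, Matrix.one_mul]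

theorem frobNorm_mul_transpose_of_transpose_mul_self_eq_one {V : Matrix (Fin n) (Fin l) ℝ}
    (hV : Vᵀ * V = 1) (M : Matrix (Fin m) (Fin l) ℝ) : frobNorm (M * Vᵀ) = frobNorm M := by
  rw [← frobNorm_transpose, transpose_mul, transpose_transpose,
    frobNorm_mul_of_transpose_mul_self_eq_one hV, frobNorm_transpose]

end Frobenius

theorem structural_forward_bound_general {m n r k ρk : ℕ}
    (A : Matrix (Fin m) (Fin n) ℝ)
    (Uk : Matrix (Fin m) (Fin k) ℝ) (Ur : Matrix (Fin m) (Fin ρk) ℝ)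
    (Vk : Matrix (Fin n) (Fin k) ℝ) (Vr : Matrix (Fin n) (Fin ρk) ℝ)
    (σk : Fin k → ℝ) (σr : Fin ρk → ℝ)
    (hA : A = Uk * Matrix.diagonal σk * Vkᵀ + Ur * Matrix.diagonal σr * Vrᵀ)
    (hUr : Urᵀ * Ur = 1)
    (hVk : Vkᵀ * Vk = 1)
    (Ω : Matrix (Fin n) (Fin r) ℝ)
    (hfull : (Vkᵀ * Ω).rank = k)
    (Py : Matrix (Fin r) (Fin m) ℝ) (hPy : IsMoorePenrose (A * Ω) Py)
    (Q : Matrix (Fin r) (Fin k) ℝ) (hQ : IsMoorePenrose (Vkᵀ * Ω) Q) :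
    specNorm (Uk * Matrix.diagonal σk * Vkᵀ - (A * Ω) * Py * A) ^ 2 ≤
      specNorm (A - Uk * Matrix.diagonal σk * Vkᵀ) ^ 2 +
      specNorm (Matrix.diagonal σr * Vrᵀ * Ω * Q) ^ 2 ∧
    frobNorm (Uk * Matrix.diagonal σk * Vkᵀ - (A * Ω) * Py * A) ^ 2 ≤
      frobNorm (A - Uk * Matrix.diagonal σk * Vkᵀ) ^ 2 +
      frobNorm (Matrix.diagonal σr * Vrᵀ * Ω * Q) ^ 2 := by
  have hP : IsStarProjection (A * Ω * Py) := hPy.isStarProjection_mul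
  have hQ1 : Vkᵀ * Ω * Q = 1 :=
    mul_eq_one_of_mul_mul_eq_of_rank_eq hQ.1 (by rw [hfull, Fintype.card_fin])
  rw [svdTruncation_sub_proj_mul_eq hA hQ1 hPy.1]
  refine ⟨?_, ?_⟩
  · rw [specNorm_neg]
    simp only [specNorm_eq_l2_opNorm]
    refine (l2_opNorm_one_sub_mul_add_mul_sq_le hP _ _).trans_eq ?_
    rw [l2_opNorm_mul_transpose_of_transpose_mul_self_eq_one hVk,
      l2_opNorm_mul_of_transpose_mul_self_eq_one hUr, add_comm]
  · rw [frobNorm_neg]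
    refine (frobNorm_one_sub_mul_add_mul_sq_le hP _ _).trans_eq ?_
    rw [frobNorm_mul_transpose_of_transpose_mul_self_eq_one hVk,
      frobNorm_mul_of_transpose_mul_self_eq_one hUr, add_comm]

/-- Structural residual-error bound for projection-based low-rank approximation:
given an SVD `A = U_k Σ_k V_kᵀ + U_{ρ−k} Σ_{ρ−k} V_{ρ−k}ᵀ` partitioned at `k`,
`Y = A Ω`, and `V_kᵀ Ω` of full row rank, for both the spectral and Frobenius
norms, `‖A_k − Y Y⁺ A‖² ≤ ‖A − A_k‖² + ‖Σ_{ρ−k} V_{ρ−k}ᵀ Ω (V_kᵀ Ω)⁺‖²`. -/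
theorem structural_forward_bound {m n r k ρk : ℕ}
    (A : Matrix (Fin m) (Fin n) ℝ)
    (Uk : Matrix (Fin m) (Fin k) ℝ) (Ur : Matrix (Fin m) (Fin ρk) ℝ)
    (Vk : Matrix (Fin n) (Fin k) ℝ) (Vr : Matrix (Fin n) (Fin ρk) ℝ)
    (σk : Fin k → ℝ) (σr : Fin ρk → ℝ)
    (hA : A = Uk * Matrix.diagonal σk * Vkᵀ + Ur * Matrix.diagonal σr * Vrᵀ)
    (hUk : Ukᵀ * Uk = 1) (hUr : Urᵀ * Ur = 1) (hUkr : Ukᵀ * Ur = 0)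
    (hVk : Vkᵀ * Vk = 1) (hVr : Vrᵀ * Vr = 1) (hVkr : Vkᵀ * Vr = 0)
    (hσk : ∀ i, 0 < σk i) (hσr : ∀ i, 0 < σr i)
    (hord : ∀ i j, σr j ≤ σk i)
    (hrank : A.rank = k + ρk)
    (Ω : Matrix (Fin n) (Fin r) ℝ) (hkr : k ≤ r)
    (hfull : (Vkᵀ * Ω).rank = k)
    (Py : Matrix (Fin r) (Fin m) ℝ) (hPy : IsMoorePenrose (A * Ω) Py)
    (Q : Matrix (Fin r) (Fin k) ℝ) (hQ : IsMoorePenrose (Vkᵀ * Ω) Q) :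
    specNorm (Uk * Matrix.diagonal σk * Vkᵀ - (A * Ω) * Py * A) ^ 2 ≤
      specNorm (A - Uk * Matrix.diagonal σk * Vkᵀ) ^ 2 +
      specNorm (Matrix.diagonal σr * Vrᵀ * Ω * Q) ^ 2 ∧
    frobNorm (Uk * Matrix.diagonal σk * Vkᵀ - (A * Ω) * Py * A) ^ 2 ≤
      frobNorm (A - Uk * Matrix.diagonal σk * Vkᵀ) ^ 2 +
      frobNorm (Matrix.diagonal σr * Vrᵀ * Ω * Q) ^ 2 :=
  structural_forward_bound_general A Uk Ur Vk Vr σk σr hA hUr hVk Ω hfull Py hPy Q hQ
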